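/- arXiv:1210.3785 — 5 statements merged into one kernel-verified Lean document; each statement's English description precedes it below -/
import Mathlib

section
/- Let g be a finite-dimensional Lie algebra over a field k of characteristic 0 whose Killing form κ is nondegenerate, and let σ₁, σ₂ be commuting involutions of g with quaternionic decomposition g = ⊕_{i,j∈{0,1}} g_{ij}. Fix x ∈ g₁₀, y ∈ g₁₁ and ξ ∈ g₀₁. Then κ(ξ, [x,η] + [ζ,y]) = 0 for all η ∈ g₁₁ and all ζ ∈ g₁₀ if and only if [ξ,x] = 0 and [ξ,y] = 0. (This identifies the orthogonal complement in g₀₁ of the image of the differential of the commutator map g₁₀ × g₁₁ → g₀₁ at (x,y) with z_g(x) ∩ z_g(y) ∩ g₀₁.) -/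
open Module

section Defs

variable (k : Type*) [Field k] (g : Type*) [LieRing g] [LieAlgebra k g]

/-- The eigenspace of a Lie algebra automorphism `σ` with eigenvalue `ε`,
as a `k`-submodule of `g`.  For an involution `σ`, `autEigenspace k g σ 1` is the
fixed-point space `g₀` and `autEigenspace k g σ (-1)` is `g₁`. -/
def autEigenspace (σ : g ≃ₗ⁅k⁆ g) (ε : k) : Submodule k g where
  carrier := {x | σ x = ε • x}
  add_mem' {a b} ha hb := by
    have : σ (a + b) = σ a + σ b := map_add σ.toLieHom a b
    simp only [Set.mem_setOf_eq] at ha hb ⊢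
    rw [this, ha, hb, smul_add]
  zero_mem' := by
    have : σ (0 : g) = 0 := map_zero σ.toLieHom
    simp only [Set.mem_setOf_eq, this, smul_zero]
  smul_mem' t a ha := by
    have : σ (t • a) = t • σ a := map_smul σ.toLieHom t a
    simp only [Set.mem_setOf_eq] at ha ⊢
    rw [this, ha, smul_comm]

/-- The centraliser `z_g(x) = {z ∈ g | [z,x] = 0}` of an element `x` of a Lie algebra,
as a submodule. -/
def centralizerSubmodule (x : g) : Submodule k g where
  carrier := {z | ⁅z, x⁆ = 0}
  add_mem' {a b} ha hb := by
    simp only [Set.mem_setOf_eq] at ha hb ⊢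
    rw [add_lie, ha, hb, add_zero]
  zero_mem' := zero_lie x
  smul_mem' t a ha := by
    simp only [Set.mem_setOf_eq] at ha ⊢
    rw [smul_lie, ha, smul_zero]

end Defs

/-! By invariance of `κ`, `κ(ξ, [x,η] + [ζ,y]) = κ([ξ,x], η) - κ([ξ,y], ζ)`, and
`[ξ,x] ∈ g₁₁`, `[ξ,y] ∈ g₁₀`. Averaging over the Klein group generated by `σ₁, σ₂` projects
`g` onto each `g_{ij}`, so the nondegeneracy of `κ` on `g` passes to its restriction to each
`g_{ij}`. -/

section

variable {k : Type*} [Field k] {g : Type*} [LieRing g] [LieAlgebra k g]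
  {σ τ : g ≃ₗ⁅k⁆ g} {ε δ : k}

lemma mem_autEigenspace_iff {x : g} : x ∈ autEigenspace k g σ ε ↔ σ x = ε • x := Iff.rfl

lemma lie_mem_autEigenspace {a b : g} (ha : a ∈ autEigenspace k g σ ε)
    (hb : b ∈ autEigenspace k g σ δ) : ⁅a, b⁆ ∈ autEigenspace k g σ (ε * δ) := by
  rw [mem_autEigenspace_iff] at ha hb ⊢
  rw [LieEquiv.map_lie, ha, hb, smul_lie, lie_smul, smul_smul]

/-- `w ↦ w + ε • σ w` is twice the projection onto the `ε`-eigenspace of the involution `σ`. -/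
lemma add_smul_apply_mem_autEigenspace (hσ : ∀ x, σ (σ x) = x) (hε : ε * ε = 1) (w : g) :
    w + ε • σ w ∈ autEigenspace k g σ ε := by
  rw [mem_autEigenspace_iff, map_add, map_smul, hσ, smul_add, smul_smul, hε, one_smul,
    add_comm]

lemma add_smul_apply_mem_autEigenspace_of_commute (hcomm : ∀ x, σ (τ x) = τ (σ x))
    {w : g} (hw : w ∈ autEigenspace k g σ δ) (ε : k) :
    w + ε • τ w ∈ autEigenspace k g σ δ := by
  rw [mem_autEigenspace_iff] at hw ⊢
  rw [map_add, map_smul, hcomm, hw, map_smul, smul_add, smul_comm ε δ]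

/-- Since `κ` is `σ`-invariant, `κ(a, σ w) = κ(σ a, w) = ε κ(a, w)` for `a` in the
`ε`-eigenspace. -/
lemma killingForm_add_smul_apply (hσ : ∀ x, σ (σ x) = x) (hε : ε * ε = 1) {a : g}
    (ha : a ∈ autEigenspace k g σ ε) (w : g) :
    killingForm k g a (w + ε • σ w) = 2 * killingForm k g a w := by
  have hσa : killingForm k g a (σ w) = ε * killingForm k g a w := by
    rw [← LieAlgebra.killingForm_of_equiv_apply σ, hσ, mem_autEigenspace_iff.mp ha, map_smul,
      LinearMap.smul_apply, smul_eq_mul]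
  rw [map_add, map_smul, smul_eq_mul, hσa, ← mul_assoc, hε]
  ring

/-- Pairing `a` with four times the projection of an arbitrary `w` onto the joint eigenspace
gives `4 κ(a, w)`. -/
lemma eq_zero_of_killingForm_autEigenspace_inf [NeZero (2 : k)]
    (hkill : (killingForm k g).Nondegenerate)
    (hσ : ∀ x, σ (σ x) = x) (hτ : ∀ x, τ (τ x) = x) (hcomm : ∀ x, σ (τ x) = τ (σ x))
    (hε : ε * ε = 1) (hδ : δ * δ = 1) {a : g}
    (ha : a ∈ autEigenspace k g σ ε ⊓ autEigenspace k g τ δ)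
    (horth : ∀ w ∈ autEigenspace k g σ ε ⊓ autEigenspace k g τ δ, killingForm k g a w = 0) :
    a = 0 := by
  refine hkill.1 a fun w => ?_
  set v := w + δ • τ w
  have hv : v ∈ autEigenspace k g τ δ := add_smul_apply_mem_autEigenspace hτ hδ w
  have hproj : v + ε • σ v ∈ autEigenspace k g σ ε ⊓ autEigenspace k g τ δ :=
    ⟨add_smul_apply_mem_autEigenspace hσ hε v,
      add_smul_apply_mem_autEigenspace_of_commute (fun x => (hcomm x).symm) hv ε⟩
  have h4 : 2 * (2 * killingForm k g a w) = 0 := by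
    rw [← killingForm_add_smul_apply hτ hδ ha.2, ← killingForm_add_smul_apply hσ hε ha.1]
    exact horth _ hproj
  simpa [two_ne_zero] using h4

lemma killingForm_lie_add_lie (ξ x y η ζ : g) :
    killingForm k g ξ (⁅x, η⁆ + ⁅ζ, y⁆) = killingForm k g ⁅ξ, x⁆ η - killingForm k g ⁅ξ, y⁆ ζ := by
  rw [map_add, LieModule.traceForm_apply_lie_apply, LieModule.traceForm_apply_lie_apply,
    ← lie_skew y ζ, map_neg, sub_eq_add_neg, neg_neg]

end

theorem killing_orthogonal_image_differential_general
    (k : Type*) [Field k] [CharZero k]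
    (g : Type*) [LieRing g] [LieAlgebra k g]
    (hkill : (killingForm k g).Nondegenerate)
    (σ₁ σ₂ : g ≃ₗ⁅k⁆ g) (hσ₁ : ∀ x, σ₁ (σ₁ x) = x) (hσ₂ : ∀ x, σ₂ (σ₂ x) = x)
    (hcomm : ∀ x, σ₁ (σ₂ x) = σ₂ (σ₁ x))
    (x y ξ : g)
    (hx : x ∈ autEigenspace k g σ₁ (-1) ⊓ autEigenspace k g σ₂ 1)
    (hy : y ∈ autEigenspace k g σ₁ (-1) ⊓ autEigenspace k g σ₂ (-1))
    (hξ : ξ ∈ autEigenspace k g σ₁ 1 ⊓ autEigenspace k g σ₂ (-1)) :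
    (∀ η ∈ autEigenspace k g σ₁ (-1) ⊓ autEigenspace k g σ₂ (-1),
      ∀ ζ ∈ autEigenspace k g σ₁ (-1) ⊓ autEigenspace k g σ₂ 1,
        killingForm k g ξ (⁅x, η⁆ + ⁅ζ, y⁆) = 0) ↔ ⁅ξ, x⁆ = 0 ∧ ⁅ξ, y⁆ = 0 := by
  have hξx : ⁅ξ, x⁆ ∈ autEigenspace k g σ₁ (-1) ⊓ autEigenspace k g σ₂ (-1) := by
    simpa using And.intro (lie_mem_autEigenspace hξ.1 hx.1) (lie_mem_autEigenspace hξ.2 hx.2)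
  have hξy : ⁅ξ, y⁆ ∈ autEigenspace k g σ₁ (-1) ⊓ autEigenspace k g σ₂ 1 := by
    simpa using And.intro (lie_mem_autEigenspace hξ.1 hy.1) (lie_mem_autEigenspace hξ.2 hy.2)
  simp_rw [killingForm_lie_add_lie]
  constructor
  · intro h
    constructor
    · refine eq_zero_of_killingForm_autEigenspace_inf hkill hσ₁ hσ₂ hcomm (by norm_num)
        (by norm_num) hξx fun η hη => ?_
      simpa using h η hη 0 (zero_mem _)
    · refine eq_zero_of_killingForm_autEigenspace_inf hkill hσ₁ hσ₂ hcomm (by norm_num)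
        (by norm_num) hξy fun ζ hζ => ?_
      simpa using h 0 (zero_mem _) ζ hζ
  · rintro ⟨hx0, hy0⟩ η - ζ -
    simp [hx0, hy0]

/-- Let `g` be a finite-dimensional Lie algebra over a field `k` of
characteristic 0 with nondegenerate Killing form `κ`, and let `σ₁, σ₂` be commuting
involutions of `g` with quaternionic decomposition `g = ⊕ g_{ij}`.  Fix `x ∈ g₁₀`,
`y ∈ g₁₁` and `ξ ∈ g₀₁`.  Then `κ(ξ, [x,η] + [ζ,y]) = 0` for all `η ∈ g₁₁` and all
`ζ ∈ g₁₀` if and only if `[ξ,x] = 0` and `[ξ,y] = 0`. -/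
theorem killing_orthogonal_image_differential
    (k : Type*) [Field k] [CharZero k]
    (g : Type*) [LieRing g] [LieAlgebra k g] [FiniteDimensional k g]
    (hkill : (killingForm k g).Nondegenerate)
    (σ₁ σ₂ : g ≃ₗ⁅k⁆ g) (hσ₁ : ∀ x, σ₁ (σ₁ x) = x) (hσ₂ : ∀ x, σ₂ (σ₂ x) = x)
    (hcomm : ∀ x, σ₁ (σ₂ x) = σ₂ (σ₁ x))
    (x y ξ : g)
    (hx : x ∈ autEigenspace k g σ₁ (-1) ⊓ autEigenspace k g σ₂ 1)
    (hy : y ∈ autEigenspace k g σ₁ (-1) ⊓ autEigenspace k g σ₂ (-1))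
    (hξ : ξ ∈ autEigenspace k g σ₁ 1 ⊓ autEigenspace k g σ₂ (-1)) :
    (∀ η ∈ autEigenspace k g σ₁ (-1) ⊓ autEigenspace k g σ₂ (-1),
      ∀ ζ ∈ autEigenspace k g σ₁ (-1) ⊓ autEigenspace k g σ₂ 1,
        killingForm k g ξ (⁅x, η⁆ + ⁅ζ, y⁆) = 0) ↔ ⁅ξ, x⁆ = 0 ∧ ⁅ξ, y⁆ = 0 :=
  killing_orthogonal_image_differential_general k g hkill σ₁ σ₂ hσ₁ hσ₂ hcomm x y ξ hx hy hξ
end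

section
/- Let g be a Lie algebra over a field of characteristic 0, and let h ∈ g be such that g = g(−1) ⊕ g(0) ⊕ g(1), where g(i) = {z ∈ g | [h,z] = 2 i z}. Let e ∈ g(1) and f ∈ g(−1) satisfy [e,f] = h, and assume that the only z ∈ g(−1) with [z,e] = 0 is z = 0. Then for all x, y ∈ g(−1): [[[x,e], e−f], [[y,e], e+f]] = 0 if and only if [x, [e,y]] = 0. (That is, the pair ([[x,e],e−f], [[y,e],e+f]) lies in the zero-fibre of the commutator map exactly when the Jordan product x ∘ y = [x,[e,y]] on g(−1) vanishes.) -/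
open Module

section Defs

variable (k : Type*) [Field k] (g : Type*) [LieRing g] [LieAlgebra k g]

/-- The eigenspace of `ad h` with eigenvalue `c`, as a submodule:
`{z ∈ g | [h, z] = c • z}`.  For a short grading, `g(i) = adEigenspace k g h (2 * i)`
for `i = -1, 0, 1`. -/
def adEigenspace (h : g) (c : k) : Submodule k g where
  carrier := {z | ⁅h, z⁆ = c • z}
  add_mem' {a b} ha hb := by
    simp only [Set.mem_setOf_eq] at ha hb ⊢
    rw [lie_add, ha, hb, smul_add]
  zero_mem' := by simp
  smul_mem' t a ha := by
    simp only [Set.mem_setOf_eq] at ha ⊢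
    rw [lie_smul, ha, smul_comm]

end Defs

lemma mem_adEigenspace_iff {k : Type*} [Field k] {g : Type*} [LieRing g] [LieAlgebra k g]
    {h z : g} {c : k} : z ∈ adEigenspace k g h c ↔ ⁅h, z⁆ = c • z := Iff.rfl

lemma adEigenspace_eq_eigenspace (k : Type*) [Field k] (g : Type*) [LieRing g] [LieAlgebra k g]
    (h : g) (c : k) : adEigenspace k g h c = Module.End.eigenspace (LieAlgebra.ad k g h) c := by
  ext z
  rw [mem_adEigenspace_iff, Module.End.mem_eigenspace_iff, LieAlgebra.ad_apply]

/-- In the presence of the short grading, any `ad h`-eigenvector with eigenvalue other than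
`-2, 0, 2` vanishes. -/
lemma eigvec_eq_zero {k : Type*} [Field k] {g : Type*} [LieRing g] [LieAlgebra k g]
    {h : g}
    (hgrad : DirectSum.IsInternal
      ![adEigenspace k g h (-2), adEigenspace k g h 0, adEigenspace k g h 2])
    {c : k} (hm2 : c ≠ -2) (h0 : c ≠ 0) (h2 : c ≠ 2)
    {z : g} (hz : ⁅h, z⁆ = c • z) : z = 0 := by
  set F := LieAlgebra.ad k g h
  have hzc : z ∈ Module.End.eigenspace F c := by
    rw [Module.End.mem_eigenspace_iff, LieAlgebra.ad_apply]; exact hz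
  have htop : z ∈ (⨆ j, ⨆ _ : j ≠ c, Module.End.eigenspace F j) := by
    have h1 : z ∈ (⨆ i, ![adEigenspace k g h (-2), adEigenspace k g h 0,
        adEigenspace k g h 2] i) := by
      rw [hgrad.submodule_iSup_eq_top]; trivial
    have h2 : (⨆ i, ![adEigenspace k g h (-2), adEigenspace k g h 0,
        adEigenspace k g h 2] i) ≤ ⨆ j, ⨆ _ : j ≠ c, Module.End.eigenspace F j := by
      refine iSup_le fun i => ?_
      fin_cases i
      · simpa [adEigenspace_eq_eigenspace] using
          le_iSup₂ (f := fun j (_ : j ≠ c) => Module.End.eigenspace F j) (-2) (Ne.symm hm2)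
      · simpa [adEigenspace_eq_eigenspace] using
          le_iSup₂ (f := fun j (_ : j ≠ c) => Module.End.eigenspace F j) (0 : k) (Ne.symm h0)
      · simpa [adEigenspace_eq_eigenspace] using
          le_iSup₂ (f := fun j (_ : j ≠ c) => Module.End.eigenspace F j) (2 : k) (Ne.symm h2)
    exact h2 h1
  have := (Module.End.eigenspaces_iSupIndep F) c
  exact (Submodule.mem_bot k).mp (this.le_bot ⟨hzc, htop⟩)

/-- Let `g` be a Lie algebra over a field of characteristic 0 and `h ∈ g`
such that `g = g(-1) ⊕ g(0) ⊕ g(1)` with `g(i) = {z | [h,z] = 2 i z}` (a short grading).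
Let `e ∈ g(1)` and `f ∈ g(-1)` satisfy `[e,f] = h`, and assume the only `z ∈ g(-1)` with
`[z,e] = 0` is `z = 0`.  Then for all `x, y ∈ g(-1)`:
`[[[x,e], e-f], [[y,e], e+f]] = 0` if and only if the Jordan product `x ∘ y = [x,[e,y]]`
vanishes. -/
theorem short_grading_zero_fibre_iff_jordan
    (k : Type*) [Field k] [CharZero k]
    (g : Type*) [LieRing g] [LieAlgebra k g]
    (h e f : g)
    (hgrad : DirectSum.IsInternal
      ![adEigenspace k g h (-2), adEigenspace k g h 0, adEigenspace k g h 2])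
    (he : e ∈ adEigenspace k g h 2) (hf : f ∈ adEigenspace k g h (-2))
    (hef : ⁅e, f⁆ = h)
    (hinj : ∀ z ∈ adEigenspace k g h (-2), ⁅z, e⁆ = 0 → z = 0)
    (x y : g) (hx : x ∈ adEigenspace k g h (-2)) (hy : y ∈ adEigenspace k g h (-2)) :
    ⁅⁅⁅x, e⁆, e - f⁆, ⁅⁅y, e⁆, e + f⁆⁆ = 0 ↔ ⁅x, ⁅e, y⁆⁆ = 0 := by
  have hx' : ⁅h, x⁆ = (-2 : k) • x := hx
  have hy' : ⁅h, y⁆ = (-2 : k) • y := hy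
  have he' : ⁅h, e⁆ = (2 : k) • e := he
  -- eigenvalues add under brackets
  have addEig : ∀ (a b : g) (c d : k), ⁅h, a⁆ = c • a → ⁅h, b⁆ = d • b →
      ⁅h, ⁅a, b⁆⁆ = (c + d) • ⁅a, b⁆ := by
    intro a b c d ha hb
    rw [leibniz_lie, ha, hb, smul_lie, lie_smul, add_smul]
  -- degree ±4 brackets vanish
  have hxy : ⁅x, y⁆ = 0 :=
    eigvec_eq_zero hgrad (c := -2 + -2) (by norm_num) (by norm_num) (by norm_num)
      (addEig x y (-2) (-2) hx' hy')
  have hxf : ⁅x, f⁆ = 0 :=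
    eigvec_eq_zero hgrad (c := -2 + -2) (by norm_num) (by norm_num) (by norm_num)
      (addEig x f (-2) (-2) hx' hf)
  have hyf : ⁅y, f⁆ = 0 :=
    eigvec_eq_zero hgrad (c := -2 + -2) (by norm_num) (by norm_num) (by norm_num)
      (addEig y f (-2) (-2) hy' hf)
  -- degrees of u = ⁅x,e⁆ and v = ⁅y,e⁆
  have hu0 : ⁅h, ⁅x, e⁆⁆ = (0 : k) • ⁅x, e⁆ := by
    have := addEig x e (-2) 2 hx' he'
    rw [show (-2 + 2 : k) = 0 by norm_num] at this
    exact this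
  have hv0 : ⁅h, ⁅y, e⁆⁆ = (0 : k) • ⁅y, e⁆ := by
    have := addEig y e (-2) 2 hy' he'
    rw [show (-2 + 2 : k) = 0 by norm_num] at this
    exact this
  have hue2 : ⁅h, ⁅⁅x, e⁆, e⁆⁆ = (2 : k) • ⁅⁅x, e⁆, e⁆ := by
    have := addEig ⁅x, e⁆ e 0 2 hu0 he'
    rw [show (0 + 2 : k) = 2 by norm_num] at this
    exact this
  have hve2 : ⁅h, ⁅⁅y, e⁆, e⁆⁆ = (2 : k) • ⁅⁅y, e⁆, e⁆ := by
    have := addEig ⁅y, e⁆ e 0 2 hv0 he'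
    rw [show (0 + 2 : k) = 2 by norm_num] at this
    exact this
  have htop : ⁅⁅⁅x, e⁆, e⁆, ⁅⁅y, e⁆, e⁆⁆ = 0 :=
    eigvec_eq_zero hgrad (c := 2 + 2) (by norm_num) (by norm_num) (by norm_num)
      (addEig _ _ 2 2 hue2 hve2)
  -- ⁅⁅x,e⁆,f⁆ = 2 x, ⁅⁅y,e⁆,f⁆ = 2 y
  have huf : ⁅⁅x, e⁆, f⁆ = (2 : k) • x := by
    rw [lie_lie, hef, hxf, lie_zero, sub_zero, ← lie_skew, hx']
    simp
  have hvf : ⁅⁅y, e⁆, f⁆ = (2 : k) • y := by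
    rw [lie_lie, hef, hyf, lie_zero, sub_zero, ← lie_skew, hy']
    simp
  set J := ⁅x, ⁅e, y⁆⁆ with hJ
  have hyx : ⁅y, x⁆ = 0 := by rw [← lie_skew, hxy, neg_zero]
  have eJ2 : ⁅⁅x, e⁆, y⁆ = J := by rw [lie_lie, hxy, lie_zero, sub_zero]
  have eJ3 : ⁅⁅y, e⁆, x⁆ = J := by
    rw [lie_lie, hyx, lie_zero, sub_zero, ← eJ2, ← lie_skew ⁅x, e⁆ y, ← lie_skew x e,
      lie_neg, neg_neg]
  have eAy : ⁅⁅⁅x, e⁆, e⁆, y⁆ = ⁅⁅x, e⁆, ⁅e, y⁆⁆ + ⁅J, e⁆ := by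
    rw [lie_lie, eJ2, sub_eq_add_neg, lie_skew J e]
  have eBx : ⁅⁅⁅y, e⁆, e⁆, x⁆ = ⁅⁅y, e⁆, ⁅e, x⁆⁆ + ⁅J, e⁆ := by
    rw [lie_lie, eJ3, sub_eq_add_neg, lie_skew J e]
  have e_xB : ⁅x, ⁅⁅y, e⁆, e⁆⁆ = -(⁅⁅y, e⁆, ⁅e, x⁆⁆ + ⁅J, e⁆) := by
    rw [← lie_skew x ⁅⁅y, e⁆, e⁆, eBx]
  have ePneg : ⁅⁅y, e⁆, ⁅e, x⁆⁆ = -⁅⁅x, e⁆, ⁅e, y⁆⁆ := by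
    rw [← lie_skew e x, ← lie_skew e y, lie_neg, lie_neg, neg_neg,
      ← lie_skew ⁅x, e⁆ ⁅y, e⁆]
  -- the main identity
  have key : ⁅⁅⁅x, e⁆, e - f⁆, ⁅⁅y, e⁆, e + f⁆⁆ = (4 : k) • ⁅J, e⁆ := by
    rw [lie_sub, huf, lie_add, hvf]
    simp only [sub_lie, lie_add, add_lie, lie_sub, smul_lie, lie_smul]
    rw [htop, eAy, e_xB, hxy, ePneg]
    module
  constructor
  · intro h0
    have h4 : ⁅J, e⁆ = 0 := by
      have h5 : (4 : k) • ⁅J, e⁆ = 0 := key ▸ h0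
      simpa [smul_eq_zero, (by norm_num : (4 : k) ≠ 0)] using h5
    have hJmem : J ∈ adEigenspace k g h (-2) := by
      have he0 : ⁅h, ⁅e, y⁆⁆ = (0 : k) • ⁅e, y⁆ := by
        have := addEig e y 2 (-2) he' hy'
        rw [show (2 + -2 : k) = 0 by norm_num] at this
        exact this
      refine mem_adEigenspace_iff.mpr ?_
      have := addEig x ⁅e, y⁆ (-2) 0 hx' he0
      rw [show (-2 + 0 : k) = -2 by norm_num] at this
      exact this
    exact hinj J hJmem h4
  · intro h0
    rw [key, h0]
    simp
end

section
/- Let g be a finite-dimensional Lie algebra over a field k of characteristic ≠ 2, let σ₁ and σ₂ be commuting involutions of g with quaternionic decomposition g = ⊕_{i,j∈{0,1}} g_{ij}, and suppose there is a Lie algebra automorphism τ of g with σ₂ = τ ∘ σ₁ ∘ τ⁻¹. Then dim_k g₁₀ = dim_k g₀₁. -/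
open Module

/-!
Conjugation by `τ` carries the fixed space `g₀` of `σ₁` onto that of `σ₂`, so both have the same
dimension. As the involutions commute and `2` is invertible, `σ₂` splits `g₀(σ₁) = g₀₀ ⊕ g₀₁` and
`σ₁` splits `g₀(σ₂) = g₀₀ ⊕ g₁₀`; cancelling `dim g₀₀` gives `dim g₀₁ = dim g₁₀`.
-/

namespace Module.End

variable {k V : Type*} [Field k] [AddCommGroup V] [Module k V]

theorem eigenspace_eq_map_of_conj {f₁ f₂ : End k V} (e : V ≃ₗ[k] V)
    (h : ∀ x, f₂ x = e (f₁ (e.symm x))) (μ : k) :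
    f₂.eigenspace μ = (f₁.eigenspace μ).map (e : V →ₗ[k] V) := by
  ext x
  rw [Submodule.mem_map_equiv, mem_eigenspace_iff, mem_eigenspace_iff, h,
    ← map_smul e.symm, e.eq_symm_apply]

theorem disjoint_eigenspace_one_neg_one (h2 : (2 : k) ≠ 0) (f : End k V) :
    Disjoint (f.eigenspace 1) (f.eigenspace (-1)) :=
  f.eigenspaces_iSupIndep.pairwiseDisjoint fun h => h2 (by linear_combination h)

theorem inf_eigenspace_one_sup_inf_eigenspace_neg_one (h2 : (2 : k) ≠ 0) {f : End k V}
    (hf : Function.Involutive f) {A : Submodule k V} (hA : Set.MapsTo f A A) :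
    A ⊓ f.eigenspace 1 ⊔ A ⊓ f.eigenspace (-1) = A := by
  refine le_antisymm (sup_le inf_le_left inf_le_left) fun x hx => ?_
  have hsplit : (2⁻¹ : k) • (x + f x) + (2⁻¹ : k) • (x - f x) = x := by
    rw [← smul_add, add_add_sub_cancel, ← two_smul k, smul_smul, inv_mul_cancel₀ h2, one_smul]
  rw [← hsplit]
  refine Submodule.add_mem_sup (Submodule.mem_inf.mpr ⟨A.smul_mem _ (A.add_mem hx (hA hx)), ?_⟩)
    (Submodule.mem_inf.mpr ⟨A.smul_mem _ (A.sub_mem hx (hA hx)), ?_⟩)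
  · rw [mem_eigenspace_iff, map_smul, map_add, hf, one_smul, add_comm]
  · rw [mem_eigenspace_iff, map_smul, map_sub, hf, neg_one_smul, ← smul_neg, neg_sub]

theorem finrank_eq_finrank_inf_eigenspace_one_add_neg_one [FiniteDimensional k V]
    (h2 : (2 : k) ≠ 0) {f : End k V} (hf : Function.Involutive f) {A : Submodule k V}
    (hA : Set.MapsTo f A A) :
    finrank k A = finrank k ↥(A ⊓ f.eigenspace 1) + finrank k ↥(A ⊓ f.eigenspace (-1)) := by
  have hdisj : A ⊓ f.eigenspace 1 ⊓ (A ⊓ f.eigenspace (-1)) = ⊥ :=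
    ((disjoint_eigenspace_one_neg_one h2 f).mono inf_le_right inf_le_right).eq_bot
  have := Submodule.finrank_sup_add_finrank_inf_eq (A ⊓ f.eigenspace 1) (A ⊓ f.eigenspace (-1))
  rwa [inf_eigenspace_one_sup_inf_eigenspace_neg_one h2 hf hA, hdisj, finrank_bot,
    add_zero] at this

end Module.End

section LieAutomorphism

variable {k g : Type*} [Field k] [LieRing g] [LieAlgebra k g]

theorem autEigenspace_eq_eigenspace (σ : g ≃ₗ⁅k⁆ g) (ε : k) :
    autEigenspace k g σ ε = Module.End.eigenspace (σ.toLinearEquiv : Module.End k g) ε := by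
  ext x
  exact Module.End.mem_eigenspace_iff.symm

theorem finrank_autEigenspace_eq_of_conj {σ₁ σ₂ τ : g ≃ₗ⁅k⁆ g}
    (hconj : ∀ x, σ₂ x = τ (σ₁ (τ.symm x))) (ε : k) :
    finrank k (autEigenspace k g σ₂ ε) = finrank k (autEigenspace k g σ₁ ε) := by
  rw [autEigenspace_eq_eigenspace, autEigenspace_eq_eigenspace,
    Module.End.eigenspace_eq_map_of_conj (f₁ := σ₁.toLinearEquiv) (f₂ := σ₂.toLinearEquiv)
      τ.toLinearEquiv hconj, LinearEquiv.finrank_map_eq]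

theorem finrank_autEigenspace_eq_add [FiniteDimensional k g] (h2 : (2 : k) ≠ 0)
    {σ₁ σ₂ : g ≃ₗ⁅k⁆ g} (hσ₂ : Function.Involutive σ₂) (hcomm : ∀ x, σ₁ (σ₂ x) = σ₂ (σ₁ x))
    (ε : k) :
    finrank k (autEigenspace k g σ₁ ε) =
      finrank k ↥(autEigenspace k g σ₁ ε ⊓ autEigenspace k g σ₂ 1) +
        finrank k ↥(autEigenspace k g σ₁ ε ⊓ autEigenspace k g σ₂ (-1)) := by
  rw [autEigenspace_eq_eigenspace σ₁, autEigenspace_eq_eigenspace σ₂,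
    autEigenspace_eq_eigenspace σ₂]
  exact Module.End.finrank_eq_finrank_inf_eigenspace_one_add_neg_one h2 hσ₂
    (Module.End.mapsTo_genEigenspace_of_comm (LinearMap.ext hcomm) ε 1)

end LieAutomorphism

/-- Let `g` be a finite-dimensional Lie algebra over a field `k` of
characteristic `≠ 2`, let `σ₁, σ₂` be commuting involutions of `g` with quaternionic
decomposition `g = ⊕ g_{ij}`, and suppose `σ₂ = τ σ₁ τ⁻¹` for some automorphism `τ` of `g`.
Then `dim g₁₀ = dim g₀₁`. -/
theorem dyad_dim_eq
    (k : Type*) [Field k] (h2 : (2 : k) ≠ 0)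
    (g : Type*) [LieRing g] [LieAlgebra k g] [FiniteDimensional k g]
    (σ₁ σ₂ τ : g ≃ₗ⁅k⁆ g) (hσ₁ : ∀ x, σ₁ (σ₁ x) = x) (hσ₂ : ∀ x, σ₂ (σ₂ x) = x)
    (hcomm : ∀ x, σ₁ (σ₂ x) = σ₂ (σ₁ x))
    (hconj : ∀ x, σ₂ x = τ (σ₁ (τ.symm x))) :
    finrank k ↥(autEigenspace k g σ₁ (-1) ⊓ autEigenspace k g σ₂ 1) =
      finrank k ↥(autEigenspace k g σ₁ 1 ⊓ autEigenspace k g σ₂ (-1)) := by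
  have hsplit₁ := finrank_autEigenspace_eq_add h2 hσ₂ hcomm 1
  have hsplit₂ := finrank_autEigenspace_eq_add h2 hσ₁ (fun x => (hcomm x).symm) 1
  rw [finrank_autEigenspace_eq_of_conj hconj, inf_comm,
    inf_comm (autEigenspace k g σ₂ 1)] at hsplit₂
  omega
end

section
/- Let k be an algebraically closed field of characteristic 0, n ≥ 1, and B an n×n matrix over k. Assume that the coefficient of λ^i in the characteristic polynomial of B vanishes whenever n − i is odd, and that B is regular, i.e. the minimal polynomial of B has degree n. Then B is conjugate to −B: there exists an invertible n×n matrix A over k such that A B A⁻¹ = −B. -/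
/-!
Regularity forces the minimal polynomial of `B` to be its characteristic polynomial `χ`, and the
parity condition says `(-1)ⁿ χ(-X) = χ`, which is the minimal polynomial of `-B`. An endomorphism
`f` of an `n`-dimensional space whose minimal polynomial `μ` has degree `n` turns the space into
the `K[X]`-module `K[X] ⧸ (μ)`: the structure theorem over a PID provides a vector whose
annihilator is `(μ)`, and `p ↦ p(f) v` is injective on polynomials of degree `< n`, hence onto by
counting dimensions. Two such endomorphisms with the same `μ` are therefore conjugate.
-/

open Polynomial Module

namespace Polynomial

theorem neg_one_pow_natDegree_mul_comp_neg_X_eq_self {R : Type*} [CommRing R] {p : R[X]}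
    (hp : ∀ i, Odd (p.natDegree - i) → p.coeff i = 0) :
    (-1) ^ p.natDegree * p.comp (-X) = p := by
  ext i
  rw [← C_1, ← C_neg, ← C_pow, coeff_C_mul, show (-X : R[X]) = C (-1) * X by simp,
    comp_C_mul_X_coeff]
  rcases Nat.even_or_odd (p.natDegree - i) with heven | hodd
  · rcases le_or_gt i p.natDegree with hle | hlt
    · rw [mul_left_comm, ← pow_add, show p.natDegree + i = p.natDegree - i + 2 * i by omega,
        pow_add, heven.neg_one_pow, pow_mul, neg_one_sq, one_pow, one_mul, mul_one]
    · simp [coeff_eq_zero_of_natDegree_lt hlt]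
  · simp [hp i hodd]

end Polynomial

namespace Module.End

variable {K V W : Type*} [Field K] [AddCommGroup V] [Module K V] [FiniteDimensional K V]
  [AddCommGroup W] [Module K W] [FiniteDimensional K W]

theorem surjective_toSpanSingleton_of_ker_eq_span_minpoly {f : End K V}
    (hf : (minpoly K f).natDegree = finrank K V) {x : AEval' f}
    (hx : LinearMap.ker (LinearMap.toSpanSingleton K[X] _ x) = Ideal.span {minpoly K f}) :
    Function.Surjective (LinearMap.toSpanSingleton K[X] _ x) := by
  set n := finrank K V
  let φ : degreeLT K n →ₗ[K] AEval' f :=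
    (LinearMap.toSpanSingleton K[X] _ x).restrictScalars K ∘ₗ (degreeLT K n).subtype
  have hφ : Function.Injective φ := by
    refine (injective_iff_map_eq_zero φ).mpr fun p hp => Subtype.ext ?_
    have hdvd : minpoly K f ∣ p := Ideal.mem_span_singleton.mp (hx ▸ hp)
    refine eq_zero_of_dvd_of_degree_lt hdvd ?_
    rw [degree_eq_natDegree (minpoly.ne_zero (Algebra.IsIntegral.isIntegral f)), hf]
    exact mem_degreeLT.mp p.2
  have hdim : finrank K (degreeLT K n) = finrank K (AEval' f) := by
    rw [(degreeLTEquiv K n).finrank_eq, finrank_fin_fun, ← (AEval'.of f).finrank_eq]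
  intro y
  obtain ⟨p, rfl⟩ := (LinearMap.injective_iff_surjective_of_finrank_eq_finrank hdim).mp hφ y
  exact ⟨p, rfl⟩

theorem nonempty_aeval'_linearEquiv_quotient_span_minpoly (f : End K V)
    (hf : (minpoly K f).natDegree = finrank K V) :
    Nonempty (AEval' f ≃ₗ[K[X]] K[X] ⧸ Ideal.span {minpoly K f}) := by
  obtain ⟨x, hx⟩ := exists_ker_toSpanSingleton_eq_annihilator K[X] (AEval' f)
  rw [← span_minpoly_eq_annihilator] at hx
  exact ⟨((LinearMap.toSpanSingleton K[X] _ x).quotKerEquivOfSurjective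
    (surjective_toSpanSingleton_of_ker_eq_span_minpoly hf hx)).symm.trans
    (Submodule.quotEquivOfEq _ _ hx)⟩

theorem exists_linearEquiv_apply_apply_of_minpoly_eq (f : End K V) (g : End K W)
    (hf : (minpoly K f).natDegree = finrank K V) (hg : (minpoly K g).natDegree = finrank K W)
    (hfg : minpoly K f = minpoly K g) :
    ∃ e : V ≃ₗ[K] W, ∀ v, e (f v) = g (e v) := by
  obtain ⟨ef⟩ := nonempty_aeval'_linearEquiv_quotient_span_minpoly f hf
  obtain ⟨eg⟩ := nonempty_aeval'_linearEquiv_quotient_span_minpoly g hg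
  let e : AEval' f ≃ₗ[K[X]] AEval' g := ef.trans (hfg ▸ eg.symm)
  refine ⟨(AEval'.of f).trans ((e.restrictScalars K).trans (AEval'.of g).symm), fun v => ?_⟩
  simp only [LinearEquiv.trans_apply, LinearEquiv.restrictScalars_apply, ← AEval'.X_smul_of,
    map_smul, AEval'.of_symm_X_smul]

theorem isConj_of_minpoly_eq {f g : End K V} (hf : (minpoly K f).natDegree = finrank K V)
    (hfg : minpoly K f = minpoly K g) : IsConj f g := by
  obtain ⟨e, he⟩ := exists_linearEquiv_apply_apply_of_minpoly_eq f g hf (hfg ▸ hf) hfg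
  exact ⟨(LinearMap.GeneralLinearGroup.generalLinearEquiv K V).symm e, LinearMap.ext he⟩

end Module.End

theorem Matrix.isConj_of_minpoly_eq {K ι : Type*} [Field K] [Fintype ι] [DecidableEq ι]
    {A B : Matrix ι ι K} (hA : (minpoly K A).natDegree = Fintype.card ι)
    (hAB : minpoly K A = minpoly K B) : IsConj A B := by
  have h := Module.End.isConj_of_minpoly_eq (f := toLinAlgEquiv' A) (g := toLinAlgEquiv' B)
    (by rwa [minpoly.algEquiv_eq, finrank_fintype_fun_eq_card])
    (by rw [minpoly.algEquiv_eq, minpoly.algEquiv_eq, hAB])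
  simpa using (toLinAlgEquiv' (R := K) (n := ι)).symm.toMonoidHom.map_isConj h

theorem regular_matrix_conjugate_to_neg_general
    (k : Type*) [Field k]
    (n : ℕ)
    (B : Matrix (Fin n) (Fin n) k)
    (hchar : ∀ i : ℕ, Odd (n - i) → (Matrix.charpoly B).coeff i = 0)
    (hreg : (minpoly k B).natDegree = n) :
    ∃ A : Matrix (Fin n) (Fin n) k, IsUnit A ∧ A * B * A⁻¹ = -B := by
  have hmin : minpoly k B = B.charpoly :=
    (eq_of_monic_of_dvd_of_natDegree_le (minpoly.monic (Algebra.IsIntegral.isIntegral B))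
      B.charpoly_monic B.minpoly_dvd_charpoly (by simp [hreg])).symm
  have hneg : minpoly k (-B) = minpoly k B := by
    rw [minpoly.neg, hmin]
    exact neg_one_pow_natDegree_mul_comp_neg_X_eq_self (by simpa using hchar)
  obtain ⟨c, hc⟩ := Matrix.isConj_of_minpoly_eq (by simpa using hreg) hneg.symm
  refine ⟨c, c.isUnit, ?_⟩
  rw [hc.eq, mul_assoc, ← Matrix.coe_units_inv, Units.mul_inv, mul_one]

/-- Let `k` be an algebraically closed field of characteristic 0,
`n ≥ 1`, and `B` an `n × n` matrix over `k`.  Assume the coefficient of `λ^i` in the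
characteristic polynomial of `B` vanishes whenever `n - i` is odd, and that `B` is
regular, i.e. its minimal polynomial has degree `n`.  Then `B` is conjugate to `-B`:
there is an invertible matrix `A` with `A B A⁻¹ = -B`. -/
theorem regular_matrix_conjugate_to_neg
    (k : Type*) [Field k] [IsAlgClosed k] [CharZero k]
    (n : ℕ) (hn : 1 ≤ n)
    (B : Matrix (Fin n) (Fin n) k)
    (hchar : ∀ i : ℕ, Odd (n - i) → (Matrix.charpoly B).coeff i = 0)
    (hreg : (minpoly k B).natDegree = n) :
    ∃ A : Matrix (Fin n) (Fin n) k, IsUnit A ∧ A * B * A⁻¹ = -B :=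
  regular_matrix_conjugate_to_neg_general k n B hchar hreg
end

section
/- Let λ = (λ₁ ≥ λ₂ ≥ … ≥ λ_k) and μ = (μ₁ ≥ μ₂ ≥ … ≥ μ_s) be partitions with k,s ≥ 1 and all parts positive, and set F(λ;μ) = Σ_{i=1}^{k} i·λ_i + Σ_{j=1}^{s} j·μ_j − 1 − Σ_{i=1}^{k} Σ_{j=1}^{s} min(λ_i, μ_j). Then F(λ;μ) ≥ 0; moreover, if Σ_i λ_i + Σ_j μ_j ≥ 3 then F(λ;μ) > 0. -/
open Finset

/-- The quantity `F(λ;μ) = Σ_i i·λ_i + Σ_j j·μ_j − 1 − Σ_{i,j} min(λ_i, μ_j)` attached to a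
pair of partitions `λ = (λ₁,…,λ_K)` and `μ = (μ₁,…,μ_s)` (indices are 1-based, so the
`Fin`-indexed part `lam i` has weight `i + 1`). -/
def Fpart {K s : ℕ} (lam : Fin K → ℕ) (mu : Fin s → ℕ) : ℤ :=
  (∑ i : Fin K, ((i : ℕ) + 1 : ℤ) * (lam i : ℤ)) +
    (∑ j : Fin s, ((j : ℕ) + 1 : ℤ) * (mu j : ℤ)) - 1 -
    ∑ i : Fin K, ∑ j : Fin s, (min (lam i) (mu j) : ℤ)

private lemma conj_mem' {K : ℕ} (lam : Fin K → ℕ) (h : Antitone lam) (t : ℕ) (i : Fin K) :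
    t < lam i ↔ (i : ℕ) < ((univ.filter fun j => t < lam j).card) := by
  constructor
  · intro hi
    have hsub : Iic i ⊆ univ.filter fun j => t < lam j := by
      intro j hj
      simp only [mem_Iic] at hj
      simp only [mem_filter, mem_univ, true_and]
      exact lt_of_lt_of_le hi (h hj)
    have := card_le_card hsub
    rwa [Fin.card_Iic] at this
  · intro hi
    by_contra hlt
    push_neg at hlt
    have hsub : (univ.filter fun j => t < lam j) ⊆ Iio i := by
      intro j hj
      simp only [mem_filter, mem_univ, true_and] at hj
      simp only [mem_Iio]
      by_contra hji
      push_neg at hji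
      exact absurd (lt_of_lt_of_le hj (le_trans (h hji) hlt)) (lt_irrefl t)
    have := card_le_card hsub
    rw [Fin.card_Iio] at this
    omega

private lemma gauss' (a : ℕ) : 2 * ∑ m ∈ range a, ((m : ℤ) + 1) = a * (a + 1) := by
  induction a with
  | zero => simp
  | succ n ih =>
    rw [Finset.sum_range_succ, mul_add, ih]
    push_cast; ring

private lemma wsum' {K : ℕ} (lam : Fin K → ℕ) (h : Antitone lam) (t : ℕ) :
    2 * ∑ i : Fin K, (if t < lam i then ((i : ℕ) + 1 : ℤ) else 0) =
      (((univ.filter fun j => t < lam j).card : ℤ)) *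
        (((univ.filter fun j => t < lam j).card : ℤ) + 1) := by
  set a := (univ.filter fun j => t < lam j).card with ha
  have haK : a ≤ K := le_trans (card_filter_le _ _) (by simp)
  have : ∀ i : Fin K, (if t < lam i then ((i : ℕ) + 1 : ℤ) else 0) =
      (fun m : ℕ => if m < a then ((m : ℤ) + 1) else 0) (i : ℕ) := by
    intro i
    simp only [conj_mem' lam h t i, ← ha]
  rw [Finset.sum_congr rfl (fun i _ => this i),
    Fin.sum_univ_eq_sum_range (fun m : ℕ => if m < a then ((m : ℤ) + 1) else 0) K,
    Finset.sum_ite, Finset.sum_const_zero, add_zero,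
    show (range K).filter (fun m => m < a) = range a by
      ext m; simp [mem_range]; omega]
  exact gauss' a

private lemma indsum' (N x : ℕ) (hx : x ≤ N) :
    (x : ℤ) = ∑ t ∈ range N, (if t < x then (1:ℤ) else 0) := by
  rw [Finset.sum_boole]
  congr 1
  rw [show (range N).filter (fun t => t < x) = range x by
    ext t; simp [mem_range]; omega]
  exact (card_range x).symm

/-- Let `λ` and `μ` be partitions (weakly decreasing sequences of
positive integers) with at least one part each.  Then `F(λ;μ) ≥ 0`; moreover, if
`Σ λ_i + Σ μ_j ≥ 3` then `F(λ;μ) > 0`. -/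
theorem Fpart_nonneg_and_pos
    (K s : ℕ) (hK : 1 ≤ K) (hs : 1 ≤ s)
    (lam : Fin K → ℕ) (mu : Fin s → ℕ)
    (hlam : Antitone lam) (hmu : Antitone mu)
    (hlampos : ∀ i, 0 < lam i) (hmupos : ∀ j, 0 < mu j) :
    0 ≤ Fpart lam mu ∧
      (3 ≤ (∑ i : Fin K, lam i) + ∑ j : Fin s, mu j → 0 < Fpart lam mu) := by
  classical
  set N : ℕ := (∑ i : Fin K, lam i) + (∑ j : Fin s, mu j) with hN
  have hlamN : ∀ i, lam i ≤ N := by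
    intro i
    exact le_trans (Finset.single_le_sum (fun j _ => Nat.zero_le (lam j)) (mem_univ i))
      (Nat.le_add_right _ _)
  have hmuN : ∀ j, mu j ≤ N := by
    intro j
    exact le_trans (Finset.single_le_sum (fun j' _ => Nat.zero_le (mu j')) (mem_univ j))
      (Nat.le_add_left _ _)
  set A : ℕ → ℤ := fun t => ((univ.filter fun i => t < lam i).card : ℤ) with hA
  set B : ℕ → ℤ := fun t => ((univ.filter fun j => t < mu j).card : ℤ) with hB
  set S : ℕ → ℤ := fun t => ∑ i : Fin K, (if t < lam i then ((i : ℕ) + 1 : ℤ) else 0) with hS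
  set T : ℕ → ℤ := fun t => ∑ j : Fin s, (if t < mu j then ((j : ℕ) + 1 : ℤ) else 0) with hT
  -- P1 for lam
  have e1 : (∑ i : Fin K, ((i : ℕ) + 1 : ℤ) * (lam i : ℤ)) = ∑ t ∈ range N, S t := by
    rw [hS]
    rw [Finset.sum_comm]
    refine Finset.sum_congr rfl fun i _ => ?_
    rw [indsum' N (lam i) (hlamN i), Finset.mul_sum]
    refine Finset.sum_congr rfl fun t _ => ?_
    by_cases h : t < lam i <;> simp [h]
  have e2 : (∑ j : Fin s, ((j : ℕ) + 1 : ℤ) * (mu j : ℤ)) = ∑ t ∈ range N, T t := by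
    rw [hT]
    rw [Finset.sum_comm]
    refine Finset.sum_congr rfl fun j _ => ?_
    rw [indsum' N (mu j) (hmuN j), Finset.mul_sum]
    refine Finset.sum_congr rfl fun t _ => ?_
    by_cases h : t < mu j <;> simp [h]
  -- P3 : double sum of mins
  have e3 : (∑ i : Fin K, ∑ j : Fin s, (min (lam i) (mu j) : ℤ)) =
      ∑ t ∈ range N, A t * B t := by
    have emin : ∀ (i : Fin K) (j : Fin s), ((min (lam i) (mu j) : ℕ) : ℤ) =
        ∑ t ∈ range N, (if t < lam i then (1:ℤ) else 0) * (if t < mu j then (1:ℤ) else 0) := by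
      intro i j
      rw [indsum' N (min (lam i) (mu j)) (le_trans (min_le_left _ _) (hlamN i))]
      refine Finset.sum_congr rfl fun t _ => ?_
      by_cases h1 : t < lam i <;> by_cases h2 : t < mu j <;>
        simp [h1, h2, lt_min_iff]
    calc (∑ i : Fin K, ∑ j : Fin s, (min (lam i) (mu j) : ℤ))
        = ∑ i : Fin K, ∑ t ∈ range N,
            (if t < lam i then (1:ℤ) else 0) * ∑ j : Fin s, (if t < mu j then (1:ℤ) else 0) := by
          refine Finset.sum_congr rfl fun i _ => ?_
          rw [show (∑ j : Fin s, (min (lam i) (mu j) : ℤ)) =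
            ∑ j : Fin s, ∑ t ∈ range N,
              (if t < lam i then (1:ℤ) else 0) * (if t < mu j then (1:ℤ) else 0) from
            Finset.sum_congr rfl fun j _ => by rw [← Nat.cast_min]; exact emin i j]
          rw [Finset.sum_comm]
          refine Finset.sum_congr rfl fun t _ => ?_
          rw [Finset.mul_sum]
      _ = ∑ t ∈ range N, (∑ i : Fin K, (if t < lam i then (1:ℤ) else 0)) *
            (∑ j : Fin s, (if t < mu j then (1:ℤ) else 0)) := by
          rw [Finset.sum_comm]
          refine Finset.sum_congr rfl fun t _ => ?_
          rw [Finset.sum_mul]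
      _ = ∑ t ∈ range N, A t * B t := by
          refine Finset.sum_congr rfl fun t _ => ?_
          rw [hA, hB]
          simp [Finset.sum_boole]
  -- sum of A over t equals |lam|
  have sumA : ∑ t ∈ range N, A t = ((∑ i : Fin K, lam i : ℕ) : ℤ) := by
    have : ∀ t, A t = ∑ i : Fin K, (if t < lam i then (1:ℤ) else 0) := by
      intro t; rw [hA]; simp [Finset.sum_boole]
    rw [Finset.sum_congr rfl fun t _ => this t, Finset.sum_comm]
    push_cast
    exact Finset.sum_congr rfl fun i _ => (indsum' N (lam i) (hlamN i)).symm
  have sumB : ∑ t ∈ range N, B t = ((∑ j : Fin s, mu j : ℕ) : ℤ) := by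
    have : ∀ t, B t = ∑ j : Fin s, (if t < mu j then (1:ℤ) else 0) := by
      intro t; rw [hB]; simp [Finset.sum_boole]
    rw [Finset.sum_congr rfl fun t _ => this t, Finset.sum_comm]
    push_cast
    exact Finset.sum_congr rfl fun j _ => (indsum' N (mu j) (hmuN j)).symm
  -- the key identity
  have key : 2 * Fpart lam mu = (∑ t ∈ range N, ((A t - B t)^2 + A t + B t)) - 2 := by
    have expand : ∑ t ∈ range N, ((A t - B t)^2 + A t + B t) =
        2 * (∑ t ∈ range N, S t) + 2 * (∑ t ∈ range N, T t) - 2 * ∑ t ∈ range N, A t * B t := by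
      rw [Finset.mul_sum, Finset.mul_sum, Finset.mul_sum, ← Finset.sum_add_distrib,
        ← Finset.sum_sub_distrib]
      refine Finset.sum_congr rfl fun t _ => ?_
      have h1 := wsum' lam hlam t
      have h2 := wsum' mu hmu t
      nlinarith [h1, h2]
    rw [Fpart, e1, e2, e3]
    rw [expand]
    ring
  -- nonnegativity of terms
  have hterm0 : ∀ t ∈ range N, (0:ℤ) ≤ (A t - B t)^2 + A t + B t := by
    intro t _
    have := sq_nonneg (A t - B t)
    have hA0 : (0:ℤ) ≤ A t := by rw [hA]; positivity
    have hB0 : (0:ℤ) ≤ B t := by rw [hB]; positivity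
    linarith
  have hNpos : 0 ∈ range N := by
    rw [mem_range, hN]
    have := Finset.single_le_sum (fun i _ => Nat.zero_le (lam i)) (mem_univ ⟨0, hK⟩)
    have := hlampos ⟨0, hK⟩
    omega
  have hA0K : A 0 = (K : ℤ) := by
    rw [hA]
    simp only
    rw [show (univ.filter fun i : Fin K => 0 < lam i) = univ from
      Finset.filter_true_of_mem fun i _ => hlampos i]
    simp
  have hB0s : B 0 = (s : ℤ) := by
    rw [hB]
    simp only
    rw [show (univ.filter fun j : Fin s => 0 < mu j) = univ from
      Finset.filter_true_of_mem fun j _ => hmupos j]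
    simp
  constructor
  · -- nonnegativity
    have hsingle := Finset.single_le_sum hterm0 hNpos
    rw [hA0K, hB0s] at hsingle
    have hKZ : (1:ℤ) ≤ (K:ℤ) := by exact_mod_cast hK
    have hsZ : (1:ℤ) ≤ (s:ℤ) := by exact_mod_cast hs
    have hsq : (0:ℤ) ≤ ((K:ℤ) - (s:ℤ))^2 := sq_nonneg _
    have h2F : 0 ≤ 2 * Fpart lam mu := by rw [key]; linarith
    linarith
  · -- positivity
    intro h3
    have h3Z : (3:ℤ) ≤ ((∑ i : Fin K, lam i : ℕ) : ℤ) + ((∑ j : Fin s, mu j : ℕ) : ℤ) := by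
      exact_mod_cast h3
    have hge : ∑ t ∈ range N, (A t + B t) ≤ ∑ t ∈ range N, ((A t - B t)^2 + A t + B t) := by
      refine Finset.sum_le_sum fun t _ => ?_
      have := sq_nonneg (A t - B t)
      linarith
    rw [Finset.sum_add_distrib, sumA, sumB] at hge
    have h2F : 1 ≤ 2 * Fpart lam mu := by rw [key]; linarith
    linarith
end
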